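/- arXiv:1611.01115 — 4 statements merged into one kernel-verified Lean document; each statement's English description precedes it below -/
import Mathlib

section
/- For all integers n, m ≥ 1, the number of taxi walks satisfies c_{n+m} ≤ c_n · c_m. -/
open Filter

/-- The oriented step relation of the Manhattan lattice. -/
def taxiStep (u v : ℤ × ℤ) : Prop :=
  (Even u.2 ∧ v = (u.1 + 1, u.2)) ∨
  (Odd u.2 ∧ v = (u.1 - 1, u.2)) ∨
  (Even u.1 ∧ v = (u.1, u.2 + 1)) ∨
  (Odd u.1 ∧ v = (u.1, u.2 - 1))

/-- Perpendicularity of two step vectors. -/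
def perp (d e : ℤ × ℤ) : Prop := d.1 * e.1 + d.2 * e.2 = 0

instance (d e : ℤ × ℤ) : Decidable (perp d e) := by unfold perp; infer_instance

/-- The walk `l` turns at its `i`-th vertex (meaningful for `1 ≤ i ≤ l.length - 2`). -/
def turnAt (l : List (ℤ × ℤ)) (i : ℕ) : Prop :=
  perp (l.getD i 0 - l.getD (i - 1) 0) (l.getD (i + 1) 0 - l.getD i 0)

instance (l : List (ℤ × ℤ)) (i : ℕ) : Decidable (turnAt l i) := by
  unfold turnAt; infer_instance

/-- A taxi walk, recorded as its list of vertices (a walk of length `n` has `n + 1` vertices). -/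
def IsTaxiWalk (l : List (ℤ × ℤ)) : Prop :=
  l ≠ [] ∧ l.Nodup ∧
  (∀ i, i + 1 < l.length → taxiStep (l.getD i 0) (l.getD (i + 1) 0)) ∧
  (∀ i, 1 ≤ i → i + 2 < l.length → ¬(turnAt l i ∧ turnAt l (i + 1)))

/-- The set of taxi walks of length `n` starting at the origin. -/
def originWalks (n : ℕ) : Set (List (ℤ × ℤ)) :=
  {l | IsTaxiWalk l ∧ l.length = n + 1 ∧ l.getD 0 0 = 0}

/-- `taxiCount n` is `c_n`, the number of taxi walks of length `n` starting at the origin. -/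
noncomputable def taxiCount (n : ℕ) : ℕ := (originWalks n).ncard

/-- The turn-word of a walk: `true` (the letter `t`) where the walk turns,
`false` (the letter `s`) where it goes straight. -/
def turnWord (l : List (ℤ × ℤ)) : List Bool :=
  (List.range (l.length - 2)).map fun i => decide (turnAt l (i + 1))

/-- The encoding of a taxi walk starting at the origin: the first coordinate is `true`
(for `N`) if `v₁ = (0,1)` and `false` (for `E`) if `v₁ = (1,0)`; the second is the turn-word. -/
def encode (l : List (ℤ × ℤ)) : Bool × List Bool :=
  (decide (l.getD 1 0 = (0, 1)), turnWord l)

/-- A bridge: a taxi walk from `(0,0)` to `(1,0)` staying at abscissa `≥ 1` after the start,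
whose last step is horizontal and ends at maximal abscissa. -/
def IsBridge (l : List (ℤ × ℤ)) : Prop :=
  IsTaxiWalk l ∧ 2 ≤ l.length ∧ l.getD 0 0 = (0, 0) ∧ l.getD 1 0 = (1, 0) ∧
  (∀ i, 1 ≤ i → i < l.length → 1 ≤ (l.getD i 0).1) ∧
  (l.getD (l.length - 1) 0).2 = (l.getD (l.length - 2) 0).2 ∧
  (∀ i, i < l.length → (l.getD i 0).1 ≤ (l.getD (l.length - 1) 0).1)

/-- `bridgeCount n` is `b_n`, the number of bridges of length `n`, with `b_0 = 1`. -/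
noncomputable def bridgeCount : ℕ → ℕ
  | 0 => 1
  | n + 1 => {l : List (ℤ × ℤ) | IsBridge l ∧ l.length = n + 2}.ncard

/-- The normalizing symmetry `f_{(x,y)}` of the oriented Manhattan lattice. -/
def normMap (p : ℤ × ℤ) (q : ℤ × ℤ) : ℤ × ℤ :=
  if Even p.1 then
    (if Even p.2 then (q.1 - p.1, q.2 - p.2) else (-(q.1 - p.1), q.2 - p.2))
  else
    (if Even p.2 then (q.1 - p.1, -(q.2 - p.2)) else (-(q.1 - p.1), -(q.2 - p.2)))

/-- The vertex `v_i` is a cutvertex of the bridge `l`. -/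
def IsCutAt (l : List (ℤ × ℤ)) (i : ℕ) : Prop :=
  0 < i ∧ i + 1 < l.length ∧
  IsBridge (l.take (i + 1)) ∧
  l.getD (i + 1) 0 = l.getD i 0 + (1, 0) ∧
  IsBridge ((l.drop i).map (normMap (l.getD i 0)))

/-- An irreducible bridge: a bridge with no cutvertex. -/
def IsIrreducibleBridge (l : List (ℤ × ℤ)) : Prop :=
  IsBridge l ∧ ∀ i, ¬ IsCutAt l i

/-- `irrBridgeCount n` is `a_n`, the number of irreducible bridges of length `n`, with `a_0 = 0`. -/
noncomputable def irrBridgeCount : ℕ → ℕ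
  | 0 => 0
  | n + 1 => {l : List (ℤ × ℤ) | IsIrreducibleBridge l ∧ l.length = n + 2}.ncard

/-! Cut a walk of length `n + m` at its vertex `v_n`. The first piece is a taxi walk of length `n`
from the origin. The second piece starts at `v_n`; the symmetry `normMap v_n` of the oriented
lattice moves it to a taxi walk of length `m` from the origin, because it preserves orientations
and perpendicularity. The two pieces together with `v_n` determine the walk, so this gives an
injection from the walks of length `n + m` into pairs of walks of lengths `n` and `m`. -/

namespace List

variable {α β : Type*} {l : List α} {d : α}

theorem getD_take_of_lt {k i : ℕ} (h : i < k) : (l.take k).getD i d = l.getD i d := by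
  rw [getD_eq_getElem?_getD, getD_eq_getElem?_getD, getElem?_take, if_pos h]

theorem getD_drop (k i : ℕ) : (l.drop k).getD i d = l.getD (k + i) d := by
  rw [getD_eq_getElem?_getD, getD_eq_getElem?_getD, getElem?_drop]

theorem getD_map_of_lt (f : α → β) {d' : β} {i : ℕ} (h : i < l.length) :
    (l.map f).getD i d' = f (l.getD i d) := by
  rw [getD_eq_getElem _ _ (by simpa using h), getElem_map, getD_eq_getElem _ _ h]

theorem getD_map_range (f : ℕ → α) {i n : ℕ} (h : i < n) : ((range n).map f).getD i d = f i := by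
  rw [getD_eq_getElem?_getD, getElem?_map, getElem?_range h]
  rfl

end List

theorem normMap_injective (p : ℤ × ℤ) : Function.Injective (normMap p) := by
  rintro ⟨a, b⟩ ⟨c, d⟩ h
  unfold normMap at h
  split_ifs at h <;> (simp only [Prod.mk.injEq] at h ⊢; omega)

theorem normMap_self (p : ℤ × ℤ) : normMap p p = 0 := by
  unfold normMap
  split_ifs <;> simp [Prod.ext_iff]

theorem taxiStep.normMap (p : ℤ × ℤ) {u v : ℤ × ℤ} (h : taxiStep u v) :
    taxiStep (normMap p u) (normMap p v) := by
  rcases p with ⟨a, b⟩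
  rcases u with ⟨x, y⟩
  rcases h with ⟨_, rfl⟩ | ⟨_, rfl⟩ | ⟨_, rfl⟩ | ⟨_, rfl⟩ <;>
    (simp only [taxiStep, _root_.normMap, Int.even_iff, Int.odd_iff] at *
     split_ifs <;> simp_all <;> omega)

theorem perp_normMap_sub_iff (p a b c d : ℤ × ℤ) :
    perp (normMap p a - normMap p b) (normMap p c - normMap p d) ↔ perp (a - b) (c - d) := by
  unfold perp normMap
  split_ifs <;>
    (simp only [Prod.fst_sub, Prod.snd_sub]
     constructor <;> intro h <;> linear_combination h)

section TaxiWalk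

variable {l : List (ℤ × ℤ)}

theorem turnAt_take {k i : ℕ} (h : i + 1 < k) : turnAt (l.take k) i ↔ turnAt l i := by
  unfold turnAt
  rw [List.getD_take_of_lt (by omega), List.getD_take_of_lt (by omega),
    List.getD_take_of_lt (by omega)]

theorem turnAt_drop {k i : ℕ} (h : 1 ≤ i) : turnAt (l.drop k) i ↔ turnAt l (k + i) := by
  unfold turnAt
  rw [List.getD_drop, List.getD_drop, List.getD_drop, show k + (i - 1) = k + i - 1 by omega,
    ← add_assoc]

theorem turnAt_map_normMap (p : ℤ × ℤ) {i : ℕ} (h : i + 1 < l.length) :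
    turnAt (l.map (normMap p)) i ↔ turnAt l i := by
  unfold turnAt
  rw [List.getD_map_of_lt _ (by omega), List.getD_map_of_lt _ (by omega),
    List.getD_map_of_lt _ (by omega)]
  exact perp_normMap_sub_iff p _ _ _ _

theorem IsTaxiWalk.take (hl : IsTaxiWalk l) {k : ℕ} (hk : 0 < k) : IsTaxiWalk (l.take k) := by
  obtain ⟨hne, hnd, hstep, hturn⟩ := hl
  refine ⟨by simp [hne, hk.ne'], hnd.sublist (List.take_sublist _ _), fun i hi => ?_,
    fun i h1 h2 => ?_⟩
  · rw [List.length_take] at hi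
    rw [List.getD_take_of_lt (by omega), List.getD_take_of_lt (by omega)]
    exact hstep i (by omega)
  · rw [List.length_take] at h2
    rw [turnAt_take (by omega), turnAt_take (by omega)]
    exact hturn i h1 (by omega)

theorem IsTaxiWalk.drop (hl : IsTaxiWalk l) {k : ℕ} (hk : k < l.length) :
    IsTaxiWalk (l.drop k) := by
  obtain ⟨-, hnd, hstep, hturn⟩ := hl
  refine ⟨by simp [hk], hnd.sublist (List.drop_sublist _ _), fun i hi => ?_, fun i h1 h2 => ?_⟩
  · rw [List.length_drop] at hi
    rw [List.getD_drop, List.getD_drop]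
    exact hstep (k + i) (by omega)
  · rw [List.length_drop] at h2
    rw [turnAt_drop h1, turnAt_drop (by omega), ← add_assoc]
    exact hturn (k + i) (by omega) (by omega)

theorem IsTaxiWalk.map_normMap (hl : IsTaxiWalk l) (p : ℤ × ℤ) :
    IsTaxiWalk (l.map (normMap p)) := by
  obtain ⟨hne, hnd, hstep, hturn⟩ := hl
  refine ⟨by simpa using hne, hnd.map (normMap_injective p), fun i hi => ?_, fun i h1 h2 => ?_⟩
  · rw [List.length_map] at hi
    rw [List.getD_map_of_lt _ (by omega), List.getD_map_of_lt _ hi]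
    exact (hstep i hi).normMap p
  · rw [List.length_map] at h2
    rw [turnAt_map_normMap p (by omega), turnAt_map_normMap p (by omega)]
    exact hturn i h1 h2

end TaxiWalk

/-- Every vertex has exactly one outgoing horizontal and one outgoing vertical edge. -/
theorem taxiStep_eq_of_horizontal_iff {u v w : ℤ × ℤ} (hv : taxiStep u v) (hw : taxiStep u w)
    (hiff : v.2 = u.2 ↔ w.2 = u.2) : v = w := by
  rcases u with ⟨a, b⟩; rcases v with ⟨c, d⟩; rcases w with ⟨e, f⟩
  simp only [taxiStep, Int.even_iff, Int.odd_iff, Prod.mk.injEq] at hv hw ⊢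
  omega

/-- The `i`-th letter is `true` when the `i`-th step of the walk is horizontal. -/
def horizontalSteps (l : List (ℤ × ℤ)) : List Bool :=
  (List.range (l.length - 1)).map fun i => decide ((l.getD (i + 1) 0).2 = (l.getD i 0).2)

theorem injOn_horizontalSteps (n : ℕ) : Set.InjOn horizontalSteps (originWalks n) := by
  rintro l₁ ⟨⟨-, -, hstep₁, -⟩, hlen₁, h0₁⟩ l₂ ⟨⟨-, -, hstep₂, -⟩, hlen₂, h0₂⟩ heq
  have hvertex : ∀ i ≤ n, l₁.getD i 0 = l₂.getD i 0 := by
    intro i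
    induction i with
    | zero => intro _; rw [h0₁, h0₂]
    | succ i ih =>
      intro hi
      have hletter := congrArg (fun L => L.getD i false) heq
      simp only [horizontalSteps, hlen₁, hlen₂] at hletter
      rw [List.getD_map_range _ (by omega), List.getD_map_range _ (by omega)] at hletter
      have hstep := hstep₁ i (by omega)
      rw [ih (by omega)] at hletter hstep
      exact taxiStep_eq_of_horizontal_iff hstep (hstep₂ i (by omega))
        (decide_eq_decide.mp hletter)
  refine List.ext_getElem (by rw [hlen₁, hlen₂]) fun i hi₁ hi₂ => ?_
  rw [← List.getD_eq_getElem l₁ 0 hi₁, ← List.getD_eq_getElem l₂ 0 hi₂]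
  exact hvertex i (by omega)

theorem originWalks_finite (n : ℕ) : (originWalks n).Finite := by
  refine Set.Finite.of_finite_image ((List.finite_length_eq Bool n).subset ?_)
    (injOn_horizontalSteps n)
  rintro _ ⟨l, ⟨-, hlen, -⟩, rfl⟩
  simp [horizontalSteps, hlen]

def splitWalk (n : ℕ) (l : List (ℤ × ℤ)) : List (ℤ × ℤ) × List (ℤ × ℤ) :=
  (l.take (n + 1), (l.drop n).map (normMap (l.getD n 0)))

theorem splitWalk_injective (n : ℕ) : Function.Injective (splitWalk n) := by
  intro l₁ l₂ h
  obtain ⟨htake, hdrop⟩ := Prod.mk.inj h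
  have hvertex : l₁.getD n 0 = l₂.getD n 0 := by
    simpa [List.getD_take_of_lt (Nat.lt_succ_self n)] using congrArg (·.getD n 0) htake
  rw [hvertex] at hdrop
  calc l₁ = l₁.take n ++ l₁.drop n := (List.take_append_drop n l₁).symm
    _ = l₂.take n ++ l₂.drop n := by
      rw [List.map_injective_iff.mpr (normMap_injective _) hdrop]
      congr 1
      simpa [List.take_take] using congrArg (·.take n) htake
    _ = l₂ := List.take_append_drop n l₂

theorem mapsTo_splitWalk (n m : ℕ) :
    Set.MapsTo (splitWalk n) (originWalks (n + m)) (originWalks n ×ˢ originWalks m) := by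
  rintro l ⟨hl, hlen, h0⟩
  unfold splitWalk
  refine ⟨⟨hl.take n.succ_pos, by simp [hlen], by rwa [List.getD_take_of_lt n.succ_pos]⟩,
    ⟨(hl.drop (by omega)).map_normMap _, by simp [hlen]; omega, ?_⟩⟩
  rw [List.getD_map_of_lt _ (by simp [hlen]), List.getD_drop, add_zero, normMap_self]

theorem taxiCount_submultiplicative_general (n m : ℕ) :
    taxiCount (n + m) ≤ taxiCount n * taxiCount m := by
  rw [taxiCount, taxiCount, taxiCount, ← Set.ncard_prod]
  exact Set.ncard_le_ncard_of_injOn (splitWalk n) (mapsTo_splitWalk n m)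
    (splitWalk_injective n).injOn ((originWalks_finite n).prod (originWalks_finite m))

/-- For all integers `n, m ≥ 1` the number of taxi walks satisfies
`c_{n+m} ≤ c_n · c_m`. -/
theorem taxiCount_submultiplicative (n m : ℕ) (hn : 1 ≤ n) (hm : 1 ≤ m) :
    taxiCount (n + m) ≤ taxiCount n * taxiCount m :=
  taxiCount_submultiplicative_general n m
end

section
/- For every n ≥ 1, the number of taxi walks satisfies c_n ≤ 2·f_{n+1}, where (f_k) is the Fibonacci sequence defined by f_0 = 0, f_1 = 1, and f_k = f_{k−1} + f_{k−2} for k ≥ 2. -/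
open Filter

/-!
Every vertex of the Manhattan lattice has exactly one horizontal and one vertical out-edge, so a
taxi walk is determined by its first step and by recording, at each interior vertex, whether it
turns there. From the origin the first step goes east or north, and the turn word is a word of
length `n - 1` with no two adjacent turns; there are `fib (n + 1)` such words.
-/

def noAdjacentTrues : ℕ → Finset (List Bool)
  | 0 => {[]}
  | 1 => {[false], [true]}
  | m + 2 => (noAdjacentTrues (m + 1)).image (false :: ·) ∪
      (noAdjacentTrues m).image (fun w => true :: false :: w)

theorem card_noAdjacentTrues (m : ℕ) : (noAdjacentTrues m).card = Nat.fib (m + 2) := by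
  induction m using Nat.twoStepInduction with
  | zero => rfl
  | one => rfl
  | more m ih ih' =>
    have hdisj : Disjoint ((noAdjacentTrues (m + 1)).image (false :: ·))
        ((noAdjacentTrues m).image (fun w => true :: false :: w)) := by
      simp [Finset.disjoint_left]
    rw [noAdjacentTrues, Finset.card_union_of_disjoint hdisj,
      Finset.card_image_of_injective _ List.cons_injective,
      Finset.card_image_of_injective _ fun _ _ h => by simpa using h, ih, ih',
      Nat.fib_add_two (n := m + 2), add_comm]

theorem mem_noAdjacentTrues :
    ∀ {w : List Bool}, w.IsChain (fun a b => a = false ∨ b = false) →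
      w ∈ noAdjacentTrues w.length
  | [], _ => by simp [noAdjacentTrues]
  | [b], _ => by cases b <;> simp [noAdjacentTrues]
  | false :: _ :: _, h =>
    Finset.mem_union_left _ (Finset.mem_image_of_mem _ (mem_noAdjacentTrues h.tail))
  | true :: b :: _, h => by
    obtain rfl : b = false := by simpa using (List.isChain_cons_cons.mp h).1
    exact Finset.mem_union_right _ (Finset.mem_image_of_mem _ (mem_noAdjacentTrues h.tail.tail))

section Lattice

variable {u v w w' : ℤ × ℤ}

theorem taxiStep.eq_of_snd_eq_iff (hv : taxiStep u v) (hw : taxiStep u w)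
    (h : v.2 = u.2 ↔ w.2 = u.2) : v = w := by
  rcases hv with ⟨_, rfl⟩ | ⟨_, rfl⟩ | ⟨_, rfl⟩ | ⟨_, rfl⟩ <;>
  rcases hw with ⟨_, rfl⟩ | ⟨_, rfl⟩ | ⟨_, rfl⟩ | ⟨_, rfl⟩ <;>
    simp_all [Prod.ext_iff, Int.even_iff, Int.odd_iff] <;> omega

theorem perp_sub_iff_of_taxiStep (hv : taxiStep u v) (hw : taxiStep v w) :
    perp (v - u) (w - v) ↔ (v.2 = u.2 ↔ w.2 ≠ v.2) := by
  rcases hv with ⟨_, rfl⟩ | ⟨_, rfl⟩ | ⟨_, rfl⟩ | ⟨_, rfl⟩ <;>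
  rcases hw with ⟨_, rfl⟩ | ⟨_, rfl⟩ | ⟨_, rfl⟩ | ⟨_, rfl⟩ <;>
    simp [perp, eq_sub_iff_add_eq]

theorem taxiStep.eq_of_perp_iff (huv : taxiStep u v) (hw : taxiStep v w) (hw' : taxiStep v w')
    (h : perp (v - u) (w - v) ↔ perp (v - u) (w' - v)) : w = w' := by
  rw [perp_sub_iff_of_taxiStep huv hw, perp_sub_iff_of_taxiStep huv hw'] at h
  exact hw.eq_of_snd_eq_iff hw' (by tauto)

theorem taxiStep_zero (h : taxiStep 0 v) : v = (1, 0) ∨ v = (0, 1) := by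
  rcases h with ⟨_, rfl⟩ | ⟨h, -⟩ | ⟨_, rfl⟩ | ⟨h, -⟩ <;> simp_all

end Lattice

section Walks

variable {l l' : List (ℤ × ℤ)}

theorem IsTaxiWalk.eq_of_turnAt_iff (hl : IsTaxiWalk l) (hl' : IsTaxiWalk l')
    (hlen : l.length = l'.length) (h₀ : l.getD 0 0 = l'.getD 0 0)
    (h₁ : l.getD 1 0 = l'.getD 1 0)
    (hturn : ∀ i, i + 2 < l.length → (turnAt l (i + 1) ↔ turnAt l' (i + 1))) : l = l' := by
  have hgetD : ∀ i, l.getD i 0 = l'.getD i 0 := by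
    intro i
    induction i using Nat.twoStepInduction with
    | zero => exact h₀
    | one => exact h₁
    | more i ih ih' =>
      by_cases hi : i + 2 < l.length
      · have h := hturn i hi
        simp only [turnAt, Nat.add_sub_cancel, ← ih, ← ih'] at h
        exact (hl.2.2.1 i (by omega)).eq_of_perp_iff (hl.2.2.1 (i + 1) hi)
          (ih' ▸ hl'.2.2.1 (i + 1) (by omega)) h
      · rw [List.getD_eq_default _ _ (by omega), List.getD_eq_default _ _ (by omega)]
  refine List.ext_getElem hlen fun i hi hi' => ?_
  have := hgetD i
  rwa [List.getD_eq_getElem _ _ hi, List.getD_eq_getElem _ _ hi'] at this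

@[simp]
theorem length_turnWord (l : List (ℤ × ℤ)) : (turnWord l).length = l.length - 2 := by
  simp [turnWord]

theorem getD_turnWord {i : ℕ} (hi : i + 2 < l.length) :
    (turnWord l).getD i false = decide (turnAt l (i + 1)) := by
  rw [List.getD_eq_getElem _ _ (by simp; omega)]
  simp [turnWord]

theorem IsTaxiWalk.isChain_turnWord (hl : IsTaxiWalk l) :
    (turnWord l).IsChain (fun a b => a = false ∨ b = false) := by
  rw [List.isChain_iff_getElem]
  intro i hi
  simp only [length_turnWord] at hi
  have := hl.2.2.2 (i + 1) (by omega) (by omega)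
  simp only [turnWord, List.getElem_map, List.getElem_range, decide_eq_false_iff_not]
  tauto

theorem encode_injOn (n : ℕ) : Set.InjOn encode (originWalks n) := by
  rintro l ⟨hl, hlen, h₀⟩ l' ⟨hl', hlen', h₀'⟩ h
  simp only [encode, Prod.mk.injEq, decide_eq_decide] at h
  refine hl.eq_of_turnAt_iff hl' (hlen.trans hlen'.symm) (h₀.trans h₀'.symm) ?_ fun i hi => ?_
  · rcases n.eq_zero_or_pos with rfl | hn
    · rw [List.getD_eq_default _ _ (by omega), List.getD_eq_default _ _ (by omega)]
    have hv := taxiStep_zero (h₀ ▸ hl.2.2.1 0 (by omega))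
    have hv' := taxiStep_zero (h₀' ▸ hl'.2.2.1 0 (by omega))
    rcases hv with hv | hv <;> rcases hv' with hv' | hv' <;> simp_all
  · have := congrArg (·.getD i false) h.2
    rwa [getD_turnWord hi, getD_turnWord (by omega), decide_eq_decide] at this

theorem encode_mem_univ_product (n : ℕ) {l : List (ℤ × ℤ)} (hl : l ∈ originWalks n) :
    encode l ∈ (Finset.univ ×ˢ noAdjacentTrues (n - 1) : Finset (Bool × List Bool)) := by
  obtain ⟨hl, hlen, -⟩ := hl
  have := mem_noAdjacentTrues hl.isChain_turnWord
  rw [length_turnWord, hlen, Nat.add_sub_add_right n 1 1] at this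
  simpa only [encode, Finset.mem_product, Finset.mem_univ, true_and] using this

end Walks

theorem taxiCount_le_two_mul_fib_general (n : ℕ) :
    taxiCount n ≤ 2 * Nat.fib (n + 1) := by
  calc taxiCount n
      ≤ ((Finset.univ ×ˢ noAdjacentTrues (n - 1) : Finset (Bool × List Bool)) : Set _).ncard :=
        Set.ncard_le_ncard_of_injOn encode (fun _ => encode_mem_univ_product n) (encode_injOn n)
    _ = 2 * Nat.fib (n + 1) := by
        rw [Set.ncard_coe_finset, Finset.card_product, card_noAdjacentTrues]
        cases n <;> rfl

/-- For every `n ≥ 1`, the number of taxi walks satisfies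
`c_n ≤ 2 · f_{n+1}`, where `f` is the Fibonacci sequence with `f_0 = 0`, `f_1 = 1`. -/
theorem taxiCount_le_two_mul_fib (n : ℕ) (hn : 1 ≤ n) :
    taxiCount n ≤ 2 * Nat.fib (n + 1) :=
  taxiCount_le_two_mul_fib_general n
end

section
/- Let v_0, …, v_n be a taxi walk that turns at v_i and at v_j, where 1 ≤ i < j ≤ n−1 and the walk goes straight at every vertex v_k with i < k < j. Then the two turns are in the same rotational direction (both left turns or both right turns) if and only if j − i is odd. -/
open Filter

/-- The turn of the walk `l` at its `i`-th vertex is a left turn: the outgoing step is the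
incoming step rotated through `+π/2`. -/
def leftTurnAt (l : List (ℤ × ℤ)) (i : ℕ) : Prop :=
  l.getD (i + 1) 0 - l.getD i 0 =
    (-(l.getD i 0 - l.getD (i - 1) 0).2, (l.getD i 0 - l.getD (i - 1) 0).1)

/-! In the Manhattan lattice the direction of a step is dictated by the parity of the
coordinate it keeps fixed, and that coordinate is the same at both ends of the step. Hence two
consecutive steps that are not perpendicular are equal, so between the two turns the walk moves
`j - i` times by one unit vector `d`, changing the parity of `x + y` by `j - i`. Checking the
four directions, a turn at `v = (x, y)` is a left turn iff `x + y + e.2` is even for the incoming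
step `e`, equivalently iff `x + y + e'.2` is odd for the outgoing step `e'`. Apply the first
criterion at `v_j` and the second at `v_i`: both then involve `d`. -/

namespace taxiStep

variable {u v w : ℤ × ℤ}

theorem sub_cases (h : taxiStep u v) :
    (v - u = (1, 0) ∧ Even u.2) ∨ (v - u = (-1, 0) ∧ Odd u.2) ∨
      (v - u = (0, 1) ∧ Even u.1) ∨ (v - u = (0, -1) ∧ Odd u.1) := by
  rcases h with ⟨hp, rfl⟩ | ⟨hp, rfl⟩ | ⟨hp, rfl⟩ | ⟨hp, rfl⟩ <;> simp [Prod.ext_iff, hp]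

theorem sub_cases_target (h : taxiStep u v) :
    (v - u = (1, 0) ∧ Even v.2) ∨ (v - u = (-1, 0) ∧ Odd v.2) ∨
      (v - u = (0, 1) ∧ Even v.1) ∨ (v - u = (0, -1) ∧ Odd v.1) := by
  rcases h with ⟨hp, rfl⟩ | ⟨hp, rfl⟩ | ⟨hp, rfl⟩ | ⟨hp, rfl⟩ <;> simp [Prod.ext_iff, hp]

theorem odd_fst_add_snd_sub (h : taxiStep u v) : Odd ((v - u).1 + (v - u).2) := by
  rcases h.sub_cases with ⟨hd, -⟩ | ⟨hd, -⟩ | ⟨hd, -⟩ | ⟨hd, -⟩ <;> rw [hd] <;> decide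

theorem sub_eq_of_not_perp (huv : taxiStep u v) (hvw : taxiStep v w)
    (h : ¬ perp (v - u) (w - v)) : w - v = v - u := by
  rcases huv.sub_cases_target with ⟨hd, hp⟩ | ⟨hd, hp⟩ | ⟨hd, hp⟩ | ⟨hd, hp⟩ <;>
    rcases hvw.sub_cases with ⟨he, hq⟩ | ⟨he, hq⟩ | ⟨he, hq⟩ | ⟨he, hq⟩ <;>
    rw [hd, he] at h ⊢ <;>
    simp only [perp, Prod.mk.injEq, Int.even_iff, Int.odd_iff] at hp hq h ⊢ <;> omega

theorem rotate_iff_even (huv : taxiStep u v) (hvw : taxiStep v w) (h : perp (v - u) (w - v)) :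
    w - v = (-(v - u).2, (v - u).1) ↔ Even (v.1 + v.2 + (v - u).2) := by
  rcases huv.sub_cases_target with ⟨hd, hp⟩ | ⟨hd, hp⟩ | ⟨hd, hp⟩ | ⟨hd, hp⟩ <;>
    rcases hvw.sub_cases with ⟨he, hq⟩ | ⟨he, hq⟩ | ⟨he, hq⟩ | ⟨he, hq⟩ <;>
    rw [hd, he] at h ⊢ <;>
    simp only [perp, Prod.mk.injEq, and_true, true_iff, Int.even_iff, Int.odd_iff] at hp hq h ⊢ <;>
    omega

theorem rotate_iff_odd (huv : taxiStep u v) (hvw : taxiStep v w) (h : perp (v - u) (w - v)) :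
    w - v = (-(v - u).2, (v - u).1) ↔ Odd (v.1 + v.2 + (w - v).2) := by
  rcases huv.sub_cases_target with ⟨hd, hp⟩ | ⟨hd, hp⟩ | ⟨hd, hp⟩ | ⟨hd, hp⟩ <;>
    rcases hvw.sub_cases with ⟨he, hq⟩ | ⟨he, hq⟩ | ⟨he, hq⟩ | ⟨he, hq⟩ <;>
    rw [hd, he] at h ⊢ <;>
    simp only [perp, Prod.mk.injEq, and_true, true_iff, Int.even_iff, Int.odd_iff] at hp hq h ⊢ <;>
    omega

end taxiStep

theorem eq_add_nsmul_of_sub_eq {G : Type*} [AddCommGroup G] {p : ℕ → G} {d : G} {i j : ℕ}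
    (hij : i ≤ j) (h : ∀ k, i ≤ k → k < j → p (k + 1) - p k = d) :
    p j = p i + (j - i) • d := by
  induction j, hij using Nat.le_induction with
  | base => simp
  | succ j hij ih =>
    rw [← sub_add_cancel (p (j + 1)) (p j), h j hij (by omega),
      ih fun k hik hkj => h k hik (by omega), Nat.sub_add_comm hij, succ_nsmul]
    abel

theorem Int.even_add_mul_of_odd {a b : ℤ} (n : ℤ) (hb : Odd b) :
    Even (a + n * b) ↔ (Even a ↔ Even n) := by
  rw [Int.even_add, Int.even_mul, ← Int.not_odd_iff_even (n := b)]
  tauto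

namespace IsTaxiWalk

variable {l : List (ℤ × ℤ)}

theorem taxiStep_getD (hl : IsTaxiWalk l) {k : ℕ} (hk : k + 1 < l.length) :
    taxiStep (l.getD k 0) (l.getD (k + 1) 0) :=
  hl.2.2.1 k hk

theorem sub_getD_eq_of_straight (hl : IsTaxiWalk l) {i j : ℕ} (hj : j < l.length)
    (hstraight : ∀ k, i < k → k < j → ¬ turnAt l k) (k : ℕ) (hik : i ≤ k) (hkj : k < j) :
    l.getD (k + 1) 0 - l.getD k 0 = l.getD (i + 1) 0 - l.getD i 0 := by
  induction k, hik using Nat.le_induction with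
  | base => rfl
  | succ k hik ih =>
    rw [← ih (by omega)]
    exact (hl.taxiStep_getD (by omega)).sub_eq_of_not_perp (hl.taxiStep_getD (by omega))
      (hstraight (k + 1) (by omega) hkj)

theorem leftTurnAt_succ_iff_odd (hl : IsTaxiWalk l) {k : ℕ} (hk : k + 2 < l.length)
    (ht : turnAt l (k + 1)) :
    leftTurnAt l (k + 1) ↔ Odd ((l.getD (k + 1) 0).1 + (l.getD (k + 1) 0).2 +
      (l.getD (k + 2) 0 - l.getD (k + 1) 0).2) :=
  (hl.taxiStep_getD (by omega)).rotate_iff_odd (hl.taxiStep_getD hk) ht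

theorem leftTurnAt_succ_iff_even (hl : IsTaxiWalk l) {k : ℕ} (hk : k + 2 < l.length)
    (ht : turnAt l (k + 1)) :
    leftTurnAt l (k + 1) ↔ Even ((l.getD (k + 1) 0).1 + (l.getD (k + 1) 0).2 +
      (l.getD (k + 1) 0 - l.getD k 0).2) :=
  (hl.taxiStep_getD (by omega)).rotate_iff_even (hl.taxiStep_getD hk) ht

end IsTaxiWalk

/-- If a taxi walk turns at `v_i` and at `v_j` (`1 ≤ i < j ≤ n − 1`) and goes
straight at every vertex strictly between them, then the two turns are in the same rotational
direction if and only if `j − i` is odd. -/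
theorem consecutive_turns_direction (l : List (ℤ × ℤ)) (i j : ℕ)
    (hl : IsTaxiWalk l) (hi : 1 ≤ i) (hij : i < j) (hj : j + 1 < l.length)
    (hti : turnAt l i) (htj : turnAt l j)
    (hstraight : ∀ k, i < k → k < j → ¬ turnAt l k) :
    ((leftTurnAt l i ↔ leftTurnAt l j) ↔ Odd (j - i)) := by
  obtain ⟨i, rfl⟩ : ∃ i', i = i' + 1 := ⟨i - 1, by omega⟩
  obtain ⟨j, rfl⟩ : ∃ j', j = j' + 1 := ⟨j - 1, by omega⟩
  set p := l.getD (i + 1) 0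
  set d := l.getD (i + 2) 0 - p
  have hrun : ∀ k, i + 1 ≤ k → k < j + 1 → l.getD (k + 1) 0 - l.getD k 0 = d :=
    hl.sub_getD_eq_of_straight (by omega) hstraight
  have hpos : l.getD (j + 1) 0 = p + (j - i) • d := by
    rw [← Nat.add_sub_add_right j 1 i]
    exact eq_add_nsmul_of_sub_eq (p := fun k => l.getD k 0) hij.le hrun
  have hodd : Odd (d.1 + d.2) := (hl.taxiStep_getD (by omega)).odd_fst_add_snd_sub
  rw [hl.leftTurnAt_succ_iff_odd (by omega) hti, hl.leftTurnAt_succ_iff_even hj htj,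
    hrun j (by omega) (by omega), hpos]
  have hsum : (p + (j - i) • d).1 + (p + (j - i) • d).2 + d.2 =
      p.1 + p.2 + d.2 + (j - i : ℕ) * (d.1 + d.2) := by
    rw [Prod.fst_add, Prod.snd_add, Prod.smul_fst, Prod.smul_snd, nsmul_eq_mul, nsmul_eq_mul]
    ring
  rw [hsum, Int.even_add_mul_of_odd _ hodd, Int.even_coe_nat, Nat.add_sub_add_right,
    ← Int.not_even_iff_odd, ← Nat.not_even_iff_odd]
  tauto
end

section
/- Every closed taxi walk has length divisible by 4. -/
open Filter

/-- The cyclic walk `l` (indices mod `l.length`) turns at its `i`-th vertex. -/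
def cycTurnAt (l : List (ℤ × ℤ)) (i : ℕ) : Prop :=
  perp (l.getD i 0 - l.getD ((i + l.length - 1) % l.length) 0)
    (l.getD ((i + 1) % l.length) 0 - l.getD i 0)

/-- A closed taxi walk: a cyclic sequence of distinct vertices, each consecutive pair (indices
taken modulo the length) an oriented edge of the Manhattan lattice, with no two cyclically
consecutive turns. -/
def IsClosedTaxiWalk (l : List (ℤ × ℤ)) : Prop :=
  l ≠ [] ∧ l.Nodup ∧
  (∀ i, i < l.length → taxiStep (l.getD i 0) (l.getD ((i + 1) % l.length) 0)) ∧
  (∀ i, i < l.length → ¬(cycTurnAt l i ∧ cycTurnAt l ((i + 1) % l.length)))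

/-! The function `x + y + 2xy` modulo 4 increases by exactly 1 along every oriented edge of the
Manhattan lattice. Going once around a closed walk therefore adds its length to this potential
and returns to the starting value, so the length vanishes modulo 4. -/

def manhattanPotential (p : ℤ × ℤ) : ZMod 4 := p.1 + p.2 + 2 * p.1 * p.2

lemma manhattanPotential_of_taxiStep {u v : ℤ × ℤ} (h : taxiStep u v) :
    manhattanPotential v = manhattanPotential u + 1 := by
  have h4 : (4 : ZMod 4) = 0 := by decide
  rcases h with ⟨⟨k, hk⟩, rfl⟩ | ⟨⟨k, hk⟩, rfl⟩ | ⟨⟨k, hk⟩, rfl⟩ | ⟨⟨k, hk⟩, rfl⟩ <;>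
    simp only [manhattanPotential] <;> rw [hk] <;> push_cast
  · linear_combination (k : ZMod 4) * h4
  · linear_combination (-(k : ZMod 4) - 1) * h4
  · linear_combination (k : ZMod 4) * h4
  · linear_combination (-(k : ZMod 4) - 1) * h4

lemma natCast_length_eq_zero_of_cyclic_succ {α G : Type*} [AddCommGroupWithOne G]
    (l : List α) (d : α) (φ : α → G)
    (hφ : ∀ i < l.length, φ (l.getD ((i + 1) % l.length) d) = φ (l.getD i d) + 1) :
    (l.length : G) = 0 := by
  set n := l.length
  have hincr : ∀ i ∈ Finset.range n,
      φ (l.getD ((i + 1) % n) d) - φ (l.getD (i % n) d) = 1 := fun i hi => by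
    have hin := Finset.mem_range.mp hi
    rw [Nat.mod_eq_of_lt hin, hφ i hin, add_sub_cancel_left]
  have htelescope := Finset.sum_range_sub (fun i => φ (l.getD (i % n) d)) n
  rw [Finset.sum_congr rfl hincr, Nat.mod_self, Nat.zero_mod, sub_self] at htelescope
  simpa using htelescope

/-- Every closed taxi walk has length divisible by `4`. -/
theorem closedTaxiWalk_length_dvd_four (l : List (ℤ × ℤ)) (hl : IsClosedTaxiWalk l) :
    4 ∣ l.length := by
  obtain ⟨-, -, hstep, -⟩ := hl
  have hlength : (l.length : ZMod 4) = 0 :=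
    natCast_length_eq_zero_of_cyclic_succ l 0 manhattanPotential fun i hi =>
      manhattanPotential_of_taxiStep (hstep i hi)
  exact (ZMod.natCast_eq_zero_iff _ 4).mp hlength
end
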